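/- Let p be a prime, 𝔽_p = ℤ/pℤ, and A := 𝔽_p[X,X⁻¹]. Let H := { [[X^n, P],[0, X^{−n}]] : n ∈ ℤ, P ∈ A } ≤ SL₂(A), and let S := { [[X,0],[0,X⁻¹]], [[X⁻¹,0],[0,X]], [[1,1],[0,1]], [[1,−1],[0,1]], [[1,X],[0,1]], [[1,−X],[0,1]] } ⊆ H. Then S is a symmetric generating set of H: S = S⁻¹ and the subgroup of SL₂(A) generated by S equals H. -/

import Mathlib

/-!
Conjugating `[[1, a], [0, 1]]` by `diag(Xᵏ, X⁻ᵏ)` gives `[[1, X²ᵏ a], [0, 1]]`, so from `a = 1` and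
`a = X` the group generated by `S` contains `[[1, Xᵐ], [0, 1]]` for every `m ∈ ℤ`. Since
`a ↦ [[1, a], [0, 1]]` is additive and `𝔽_p` is additively generated by `1`, it then contains
`[[1, P], [0, 1]]` for every `P ∈ A`, and every element of `H` is
`diag(Xⁿ, X⁻ⁿ) · [[1, X⁻ⁿ P], [0, 1]]`. Finally `S = S₀ ∪ S₀⁻¹` with
`S₀ = {diag(X, X⁻¹), [[1, 1], [0, 1]], [[1, X], [0, 1]]}`.
-/

open LaurentPolynomial
open scoped MatrixGroups

namespace Stmt14

/-- The six-element set
`S = {[[X,0],[0,X⁻¹]], [[X⁻¹,0],[0,X]], [[1,±1],[0,1]], [[1,±X],[0,1]]}`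
inside `SL₂(𝔽_p[X,X⁻¹])`. -/
def Sset (p : ℕ) : Set (SL(2, LaurentPolynomial (ZMod p))) :=
  {M | (M : Matrix (Fin 2) (Fin 2) (LaurentPolynomial (ZMod p))) ∈
    ({!![T 1, 0; 0, T (-1)], !![T (-1), 0; 0, T 1],
       !![1, 1; 0, 1], !![1, -1; 0, 1],
       !![1, T 1; 0, 1], !![1, -(T 1); 0, 1]} :
      Set (Matrix (Fin 2) (Fin 2) (LaurentPolynomial (ZMod p))))}

/-- The subgroup `H = {[[Xⁿ, P],[0, X⁻ⁿ]]}` of `SL₂(𝔽_p[X,X⁻¹])`, as a set. -/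
def Hset (p : ℕ) : Set (SL(2, LaurentPolynomial (ZMod p))) :=
  {M | ∃ (n : ℤ) (P : LaurentPolynomial (ZMod p)),
    (M : Matrix (Fin 2) (Fin 2) (LaurentPolynomial (ZMod p))) = !![T n, P; 0, T (-n)]}

end Stmt14

open Matrix.SpecialLinearGroup

namespace Lamplighter

variable {R : Type*} [CommRing R]

local notation "U" => transvection (i := (0 : Fin 2)) (j := 1) zero_ne_one

lemma coe_transvection_zero_one (a : R) :
    (U a : Matrix (Fin 2) (Fin 2) R) = !![1, a; 0, 1] := by
  ext i j
  fin_cases i <;> fin_cases j <;> simp [transvection_coe]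

noncomputable def diagT (n : ℤ) : SL(2, R[T;T⁻¹]) :=
  ⟨!![T n, 0; 0, T (-n)], by simp [← T_add, -T_mul]⟩

@[simp] lemma coe_diagT (n : ℤ) :
    (diagT (R := R) n : Matrix (Fin 2) (Fin 2) R[T;T⁻¹]) = !![T n, 0; 0, T (-n)] := rfl

lemma diagT_add (m n : ℤ) : (diagT (m + n) : SL(2, R[T;T⁻¹])) = diagT m * diagT n := by
  ext : 1
  simp [← T_add, -T_mul, add_comm]

lemma diagT_zero : (diagT 0 : SL(2, R[T;T⁻¹])) = 1 := by
  ext : 1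
  simp [Matrix.one_fin_two]

lemma diagT_neg (n : ℤ) : (diagT (-n) : SL(2, R[T;T⁻¹])) = (diagT n)⁻¹ :=
  eq_inv_of_mul_eq_one_left <| by rw [← diagT_add, neg_add_cancel, diagT_zero]

lemma diagT_zpow (n : ℤ) : (diagT 1 : SL(2, R[T;T⁻¹])) ^ n = diagT n := by
  induction n using Int.induction_on with
  | zero => rw [zpow_zero, diagT_zero]
  | succ k ih => rw [zpow_add_one, ih, diagT_add]
  | pred k ih => rw [zpow_sub_one, ih, sub_eq_add_neg, diagT_add, diagT_neg 1]

lemma diagT_conj_transvection (k : ℤ) (a : R[T;T⁻¹]) :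
    diagT k * U a * (diagT k)⁻¹ = U (T (2 * k) * a) := by
  ext : 1
  have : (T k * a * T k : R[T;T⁻¹]) = T (2 * k) * a := by rw [two_mul, T_add]; ring
  simp [coe_inv, Matrix.adjugate_fin_two_of, coe_transvection_zero_one, ← T_add, -T_mul, this]

lemma coe_diagT_mul_transvection (n : ℤ) (a : R[T;T⁻¹]) :
    ((diagT n * U a : SL(2, R[T;T⁻¹])) : Matrix (Fin 2) (Fin 2) R[T;T⁻¹]) =
      !![T n, T n * a; 0, T (-n)] := by
  simp [coe_transvection_zero_one, -T_mul]

variable (R) in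
def lamplighter : Subgroup SL(2, R[T;T⁻¹]) where
  carrier := {M | ∃ (n : ℤ) (P : R[T;T⁻¹]),
    (M : Matrix (Fin 2) (Fin 2) R[T;T⁻¹]) = !![T n, P; 0, T (-n)]}
  one_mem' := ⟨0, 0, by simp [Matrix.one_fin_two]⟩
  mul_mem' := by
    rintro _ _ ⟨m, P, hM⟩ ⟨n, Q, hN⟩
    exact ⟨m + n, T m * Q + P * T (-n), by simp [hM, hN, ← T_add, -T_mul, add_comm]⟩
  inv_mem' := by
    rintro _ ⟨n, P, hM⟩
    exact ⟨-n, -P, by simp [coe_inv, hM, Matrix.adjugate_fin_two_of]⟩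

def transvectionEntries (G : Subgroup SL(2, R)) : AddSubgroup R where
  carrier := {a | U a ∈ G}
  zero_mem' := by simp [transvection_coeff_zero]
  add_mem' ha hb := by simpa [transvection_add] using mul_mem ha hb
  neg_mem' {a} ha := by
    show U (-a) ∈ G
    rw [← transvection_inv]
    exact inv_mem ha

@[simp] lemma mem_transvectionEntries {G : Subgroup SL(2, R)} {a : R} :
    a ∈ transvectionEntries G ↔ U a ∈ G := Iff.rfl

lemma T_mem_transvectionEntries {G : Subgroup SL(2, R[T;T⁻¹])} (hD : diagT 1 ∈ G)
    (h1 : U 1 ∈ G) (hX : U (T 1) ∈ G) (m : ℤ) : T m ∈ transvectionEntries G := by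
  have hconj (k : ℤ) {a : R[T;T⁻¹]} (ha : U a ∈ G) : U (T (2 * k) * a) ∈ G := by
    rw [← diagT_conj_transvection, ← diagT_zpow]
    exact mul_mem (mul_mem (zpow_mem hD k) ha) (inv_mem (zpow_mem hD k))
  obtain ⟨k, rfl | rfl⟩ := Int.even_or_odd' m
  · simpa only [mem_transvectionEntries, mul_one] using hconj k h1
  · rw [mem_transvectionEntries, T_add]
    exact hconj k hX

lemma closure_range_T_eq_top (hR : Function.Surjective (Int.cast : ℤ → R)) :
    AddSubgroup.closure (Set.range (T : ℤ → R[T;T⁻¹])) = ⊤ := by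
  refine eq_top_iff.2 fun f _ => f.induction_on' (fun _ _ => add_mem) fun n a => ?_
  obtain ⟨k, rfl⟩ := hR a
  rw [map_intCast, ← zsmul_eq_mul]
  exact zsmul_mem (AddSubgroup.subset_closure (Set.mem_range_self n)) k

lemma lamplighter_le (hR : Function.Surjective (Int.cast : ℤ → R))
    {G : Subgroup SL(2, R[T;T⁻¹])} (hD : diagT 1 ∈ G) (h1 : U 1 ∈ G) (hX : U (T 1) ∈ G) :
    lamplighter R ≤ G := by
  rintro M ⟨n, P, hM⟩
  have hU : ⊤ ≤ transvectionEntries G := by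
    rw [← closure_range_T_eq_top hR, AddSubgroup.closure_le]
    rintro _ ⟨m, rfl⟩
    exact T_mem_transvectionEntries hD h1 hX m
  have hM' : M = diagT n * U (T (-n) * P) := by
    ext : 1
    rw [coe_diagT_mul_transvection, hM, ← mul_assoc, ← T_add, add_neg_cancel, T_zero, one_mul]
  rw [hM', ← diagT_zpow]
  exact mul_mem (zpow_mem hD n) (hU (AddSubgroup.mem_top _))

variable (R) in
def gens : Set SL(2, R[T;T⁻¹]) := {diagT 1, U 1, U (T 1)}

lemma closure_gens (hR : Function.Surjective (Int.cast : ℤ → R)) :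
    Subgroup.closure (gens R) = lamplighter R := by
  refine le_antisymm (Subgroup.closure_le _ |>.2 ?_) (lamplighter_le hR ?_ ?_ ?_)
  · rintro _ (rfl | rfl | rfl)
    · exact ⟨1, 0, by simp⟩
    · exact ⟨0, 1, by simp [coe_transvection_zero_one]⟩
    · exact ⟨0, T 1, by simp [coe_transvection_zero_one]⟩
  all_goals exact Subgroup.subset_closure (by simp [gens])

end Lamplighter

open Lamplighter in
lemma Stmt14.Sset_eq_gens_union_inv (p : ℕ) : Stmt14.Sset p = gens (ZMod p) ∪ (gens (ZMod p))⁻¹ := by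
  have hcoe (A B : SL(2, (ZMod p)[T;T⁻¹])) :
      A = B ↔ (A : Matrix (Fin 2) (Fin 2) (ZMod p)[T;T⁻¹]) = B :=
    Subtype.ext_iff
  ext M
  simp only [Stmt14.Sset, gens, Set.mem_ofPred_eq, Set.mem_union, Set.mem_inv, Set.mem_insert_iff,
    Set.mem_singleton_iff, inv_eq_iff_eq_inv, ← diagT_neg, transvection_inv]
  simp only [hcoe, coe_diagT, coe_transvection_zero_one, neg_neg]
  tauto

theorem statement14 (p : ℕ) :
    (Stmt14.Sset p)⁻¹ = Stmt14.Sset p ∧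
      (Subgroup.closure (Stmt14.Sset p) :
        Set (SL(2, LaurentPolynomial (ZMod p)))) = Stmt14.Hset p := by
  rw [Stmt14.Sset_eq_gens_union_inv]
  constructor
  · rw [Set.union_inv, inv_inv, Set.union_comm]
  · rw [Subgroup.closure_union, Subgroup.closure_inv, sup_idem,
      Lamplighter.closure_gens ZMod.intCast_surjective]
    rfl
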